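/- The ring R₁ = ℝ[X,Y]/(X²+Y²+1) is a Dedekind domain whose ideal class group is trivial (equivalently, its Picard group is zero). -/

import Mathlib

noncomputable section

/-- The coordinate ring `R₁ = ℝ[X,Y]/(X²+Y²+1)` of the affine open `U₁ = D₊(z)` of the
real anisotropic conic `C = V(x²+y²+z²) ⊂ ℙ²_ℝ`. -/
def R1 : Type :=
  MvPolynomial (Fin 2) ℝ ⧸
    Ideal.span {(MvPolynomial.X 0 : MvPolynomial (Fin 2) ℝ) ^ 2 + MvPolynomial.X 1 ^ 2 + 1}

instance : CommRing R1 := Ideal.Quotient.commRing _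

open Polynomial

namespace ConicPID

def Q : Polynomial (Polynomial ℝ) := X ^ 2 + C (X ^ 2 + 1)

lemma Q_monic : Q.Monic := by
  apply monic_X_pow_add
  calc degree (C ((X:ℝ[X]) ^ 2 + 1)) ≤ 0 := degree_C_le
  _ < 2 := by norm_num

lemma Q_natDegree : Q.natDegree = 2 := by
  unfold Q; rw [natDegree_X_pow_add_C (n := 2)]

lemma Q_degree : Q.degree = 2 := by
  rw [degree_eq_natDegree Q_monic.ne_zero, Q_natDegree]; rfl

abbrev A : Type := AdjoinRoot Q

def y : A := AdjoinRoot.root Q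

def ofq : ℝ[X] →+* A := AdjoinRoot.of Q

lemma hy2 : y ^ 2 = - ofq (X ^ 2 + 1) := by
  have h := AdjoinRoot.eval₂_root Q
  unfold Q at h
  simp only [eval₂_add, eval₂_pow, eval₂_X, eval₂_C] at h
  rw [eq_neg_iff_add_eq_zero]
  exact h

/-- every element of A is of the form `ofq p + ofq q * y`. -/
lemma rep (a : A) : ∃ p q : ℝ[X], a = ofq p + ofq q * y := by
  obtain ⟨f, rfl⟩ := AdjoinRoot.mk_surjective (g := Q) a
  refine ⟨(f %ₘ Q).coeff 0, (f %ₘ Q).coeff 1, ?_⟩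
  have h1 : AdjoinRoot.mk Q f = AdjoinRoot.mk Q (f %ₘ Q) := by
    conv_lhs => rw [← modByMonic_add_div f Q]
    rw [map_add, map_mul, AdjoinRoot.mk_self, zero_mul, add_zero]
  have h2 : degree (f %ₘ Q) ≤ 1 := by
    have := degree_modByMonic_lt f Q_monic
    rw [Q_degree] at this
    exact Order.le_of_lt_succ (by exact_mod_cast this)
  rw [h1]
  conv_lhs => rw [eq_X_add_C_of_degree_le_one h2]
  rw [map_add, map_mul, AdjoinRoot.mk_C, AdjoinRoot.mk_C, AdjoinRoot.mk_X]
  show _ = ofq _ + ofq _ * y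
  rw [add_comm]
  rfl

lemma ofq_eq_zero {n : ℝ[X]} (h : ofq n = 0) : n = 0 := by
  have : Q ∣ C n := AdjoinRoot.mk_eq_zero.mp h
  by_contra hn
  have hdeg : degree (C n) < degree Q := by
    rw [Q_degree]
    exact lt_of_le_of_lt degree_C_le (by norm_num)
  have := eq_zero_of_dvd_of_degree_lt this hdeg
  exact hn (by simpa using this)

lemma rep_zero {p q : ℝ[X]} (h : ofq p + ofq q * y = 0) : p = 0 ∧ q = 0 := by
  have hmk : AdjoinRoot.mk Q (C p + C q * X) = 0 := by
    rw [map_add, map_mul, AdjoinRoot.mk_C, AdjoinRoot.mk_C, AdjoinRoot.mk_X]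
    exact h
  have hdvd : Q ∣ C p + C q * X := AdjoinRoot.mk_eq_zero.mp hmk
  have hdeg : degree (C p + C q * X) < degree Q := by
    rw [Q_degree]
    refine lt_of_le_of_lt (degree_add_le _ _) ?_
    rw [max_lt_iff]
    constructor
    · exact lt_of_le_of_lt degree_C_le (by norm_num)
    · refine lt_of_le_of_lt (degree_mul_le _ _) ?_
      refine lt_of_le_of_lt (add_le_add degree_C_le le_rfl) ?_
      simp [degree_X]
  have h0 := eq_zero_of_dvd_of_degree_lt hdvd hdeg
  constructor
  · have := congrArg (fun r => Polynomial.coeff r 0) h0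
    simpa using this
  · have := congrArg (fun r => Polynomial.coeff r 1) h0
    simpa using this

end ConicPID

namespace ConicPID

lemma eval₂_Q {S : Type*} [CommRing S] (i : ℝ[X] →+* S) (t : S) :
    Q.eval₂ i t = t ^ 2 + i (X ^ 2 + 1) := by
  unfold Q
  simp [eval₂_add, eval₂_pow, eval₂_X, eval₂_C]

/-- the conjugation `y ↦ -y`. -/
def σ : A →+* A :=
  AdjoinRoot.lift ofq (-y) (by
    rw [eval₂_Q, show (-y) ^ 2 = y ^ 2 by ring, hy2]; ring)

@[simp] lemma σ_ofq (p : ℝ[X]) : σ (ofq p) = ofq p := AdjoinRoot.lift_of _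
@[simp] lemma σ_y : σ y = -y := AdjoinRoot.lift_root _

lemma norm_eq (p q : ℝ[X]) :
    (ofq p + ofq q * y) * σ (ofq p + ofq q * y) = ofq (p ^ 2 + (X ^ 2 + 1) * q ^ 2) := by
  rw [map_add, map_mul, σ_ofq, σ_ofq, σ_y]
  have : (ofq p + ofq q * y) * (ofq p + ofq q * -y) = ofq p ^ 2 - ofq q ^ 2 * y ^ 2 := by ring
  rw [this, hy2]
  simp only [map_add, map_mul, map_pow, map_one]
  ring

lemma key0 {p q : ℝ[X]} (h : p ^ 2 + (X ^ 2 + 1) * q ^ 2 = 0) : p = 0 ∧ q = 0 := by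
  have he : ∀ t : ℝ, p.eval t = 0 ∧ q.eval t = 0 := by
    intro t
    have := congrArg (Polynomial.eval t) h
    simp only [eval_add, eval_mul, eval_pow, eval_X, eval_one, eval_zero] at this
    constructor <;> nlinarith [sq_nonneg (p.eval t), sq_nonneg (q.eval t), sq_nonneg t]
  constructor
  · exact Polynomial.funext fun r => by simpa using (he r).1
  · exact Polynomial.funext fun r => by simpa using (he r).2

lemma eq_zero_of_norm_eq_zero {a : A} {p q : ℝ[X]} (hr : a = ofq p + ofq q * y)
    (h : p ^ 2 + (X ^ 2 + 1) * q ^ 2 = 0) : a = 0 := by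
  obtain ⟨h1, h2⟩ := key0 h
  rw [hr, h1, h2]; simp

instance A_domain : IsDomain A := by
  have h10 : (1 : A) ≠ 0 := by
    intro h
    have : ofq 1 = 0 := by simpa using h
    simpa using ofq_eq_zero this
  have : Nontrivial A := ⟨1, 0, h10⟩
  haveI : NoZeroDivisors A := ⟨?_⟩
  · exact NoZeroDivisors.to_isDomain _
  intro a b hab
  obtain ⟨p, q, hpq⟩ := rep a
  obtain ⟨r, s, hrs⟩ := rep b
  have hnorm : ofq ((p ^ 2 + (X ^ 2 + 1) * q ^ 2) * (r ^ 2 + (X ^ 2 + 1) * s ^ 2)) = 0 := by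
    rw [map_mul, ← norm_eq, ← norm_eq, ← hpq, ← hrs]
    calc a * σ a * (b * σ b) = (a * b) * σ (a * b) := by rw [map_mul]; ring
    _ = 0 := by rw [hab]; simp
  have := ofq_eq_zero hnorm
  rcases mul_eq_zero.mp this with h | h
  · exact Or.inl (eq_zero_of_norm_eq_zero hpq h)
  · exact Or.inr (eq_zero_of_norm_eq_zero hrs h)

end ConicPID

namespace ConicPID

def cq' : ℝ →+* A := ofq.comp C

lemma ofq_C (t : ℝ) : ofq (C t) = cq' t := rfl

set_option maxHeartbeats 1000000 in
set_option synthInstance.maxHeartbeats 400000 in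
theorem prime_principal (P : Ideal A) (hP : P.IsPrime) : P.IsPrincipal := by
  classical
  by_cases hbot : P = ⊥
  · exact ⟨0, by rw [hbot, Submodule.span_zero_singleton]⟩
  haveI := hP
  obtain ⟨a₀, ha₀P, ha₀⟩ := Submodule.exists_mem_ne_zero_of_ne_bot hbot
  obtain ⟨p₀, q₀, hrep₀⟩ := rep a₀
  have hnP : ofq (p₀ ^ 2 + (X ^ 2 + 1) * q₀ ^ 2) ∈ P := by
    rw [← norm_eq, ← hrep₀]; exact Ideal.mul_mem_right _ _ ha₀P
  have hn0 : (p₀ ^ 2 + (X ^ 2 + 1) * q₀ ^ 2) ≠ 0 :=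
    fun h => ha₀ (eq_zero_of_norm_eq_zero hrep₀ h)
  set n' : ℝ[X] := (p₀ ^ 2 + (X ^ 2 + 1) * q₀ ^ 2) * C (p₀ ^ 2 + (X ^ 2 + 1) * q₀ ^ 2).leadingCoeff⁻¹
    with hn'def
  have hn'monic : n'.Monic := monic_mul_leadingCoeff_inv hn0
  have hn'P : ofq n' ∈ P := by rw [hn'def, map_mul]; exact Ideal.mul_mem_right _ _ hnP
  have hn'1 : n' ≠ 1 := by
    intro h
    exact hP.ne_top (Ideal.eq_top_iff_one _ |>.mpr (by simpa [h] using hn'P))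
  set d := n'.natDegree with hd
  have hd1 : 1 ≤ d := by
    rcases Nat.eq_zero_or_pos d with h | h
    · exact absurd (hn'monic.natDegree_eq_zero.mp h) hn'1
    · exact h
  set Pq : A →+* A ⧸ P := Ideal.Quotient.mk P with hPq
  -- scalars
  have h_alg : ∀ c : ℝ, Pq (ofq (C c)) = algebraMap ℝ (A ⧸ P) c := by
    intro c
    rw [IsScalarTower.algebraMap_apply ℝ A (A ⧸ P)]
    rfl
  have haeval : ∀ r : ℝ[X], Pq (ofq r) = Polynomial.aeval (Pq (ofq X)) r := by
    intro r
    induction r using Polynomial.induction_on' with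
    | add p q hp hq => rw [map_add, map_add, map_add, hp, hq]
    | monomial i c =>
        rw [← Polynomial.C_mul_X_pow_eq_monomial]
        rw [map_mul, map_mul, map_pow, map_pow, map_mul, map_pow, aeval_C, aeval_X, h_alg]
  -- reduction mod n'
  have hmod : ∀ w : ℝ[X], Pq (ofq w) = Pq (ofq (w %ₘ n')) := by
    intro w
    have hw : ofq w = ofq (w %ₘ n') + ofq n' * ofq (w /ₘ n') := by
      conv_lhs => rw [← modByMonic_add_div w n']
      rw [map_add, map_mul]
    have hmem : ofq w - ofq (w %ₘ n') ∈ P := by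
      rw [hw, add_sub_cancel_left]
      exact Ideal.mul_mem_right _ _ hn'P
    have : Pq (ofq w - ofq (w %ₘ n')) = 0 := Ideal.Quotient.eq_zero_iff_mem.mpr hmem
    rw [map_sub, sub_eq_zero] at this
    exact this
  have hdegmod : ∀ w : ℝ[X], (w %ₘ n').natDegree < d :=
    fun w => natDegree_modByMonic_lt w hn'monic hn'1
  -- finiteness
  have hspan : ∀ t : A ⧸ P,
      t ∈ Submodule.span ℝ (Set.range
        (fun k : Fin d × Fin 2 => Pq (ofq (X ^ (k.1 : ℕ)) * y ^ (k.2 : ℕ)))) := by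
    intro t
    obtain ⟨a, rfl⟩ := Ideal.Quotient.mk_surjective t
    obtain ⟨p, q, rfl⟩ := rep a
    show Pq _ ∈ _
    rw [map_add, map_mul, hmod p, hmod q]
    have hp1 : Pq (ofq (p %ₘ n')) = ∑ i ∈ Finset.range d, (p %ₘ n').coeff i • Pq (ofq X) ^ i := by
      rw [haeval, Polynomial.aeval_eq_sum_range' (hdegmod p)]
    have hq1 : Pq (ofq (q %ₘ n')) = ∑ i ∈ Finset.range d, (q %ₘ n').coeff i • Pq (ofq X) ^ i := by
      rw [haeval, Polynomial.aeval_eq_sum_range' (hdegmod q)]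
    rw [hp1, hq1, Finset.sum_mul]
    apply Submodule.add_mem
    · apply Submodule.sum_mem
      intro i hi
      apply Submodule.smul_mem
      apply Submodule.subset_span
      exact ⟨(⟨i, Finset.mem_range.mp hi⟩, ⟨0, by norm_num⟩), by simp [map_pow]⟩
    · apply Submodule.sum_mem
      intro i hi
      rw [smul_mul_assoc]
      apply Submodule.smul_mem
      apply Submodule.subset_span
      exact ⟨(⟨i, Finset.mem_range.mp hi⟩, ⟨1, by norm_num⟩), by simp [map_pow]⟩
  haveI hfin : Module.Finite ℝ (A ⧸ P) := by
    constructor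
    have htop : Submodule.span ℝ (Set.range
        (fun k : Fin d × Fin 2 => Pq (ofq (X ^ (k.1 : ℕ)) * y ^ (k.2 : ℕ)))) = ⊤ :=
      eq_top_iff.mpr (fun t _ => hspan t)
    rw [← htop]
    exact Submodule.fg_span (Set.finite_range _)
  -- the quotient is a field, embeddable into ℂ
  haveI : Nontrivial (A ⧸ P) := Ideal.Quotient.nontrivial_iff.mpr hP.ne_top
  have hinj : Function.Injective (algebraMap ℝ (A ⧸ P)) := (algebraMap ℝ (A ⧸ P)).injective
  haveI : Algebra.IsIntegral ℝ (A ⧸ P) := Algebra.IsIntegral.of_finite ℝ _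
  have hfield : IsField (A ⧸ P) := (Algebra.IsIntegral.isField_iff_isField hinj).mp
    (Field.toIsField ℝ)
  letI : Field (A ⧸ P) := hfield.toField
  haveI : NoZeroSMulDivisors ℝ (A ⧸ P) := ⟨fun {c x} h => by
    rw [Algebra.smul_def] at h
    exact (mul_eq_zero.mp h).imp_left (fun h' => hinj (by rw [h', map_zero]))⟩
  haveI : Algebra.IsAlgebraic ℝ (A ⧸ P) := Algebra.IsAlgebraic.of_finite ℝ _
  let χ : (A ⧸ P) →ₐ[ℝ] ℂ := IsAlgClosed.lift
  have hχinj : Function.Injective χ := RingHom.injective (χ.toRingHom)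
  set ψ : A →+* ℂ := χ.toRingHom.comp Pq with hψdef
  have hker : ∀ a : A, a ∈ P ↔ ψ a = 0 := by
    intro a
    constructor
    · intro h
      have : Pq a = 0 := Ideal.Quotient.eq_zero_iff_mem.mpr h
      simp [hψdef, this]
    · intro h
      have : χ (Pq a) = χ 0 := by simpa [hψdef] using h
      exact Ideal.Quotient.eq_zero_iff_mem.mp (hχinj this)
  have hψC : ∀ c : ℝ, ψ (ofq (C c)) = (c : ℂ) := by
    intro c
    have : ψ (ofq (C c)) = χ (algebraMap ℝ (A ⧸ P) c) := by rw [hψdef]; simp [h_alg c]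
    rw [this, AlgHom.commutes]
    rfl
  set u : ℂ := ψ (ofq X) with hu
  set v : ℂ := ψ y with hv
  have huv : v ^ 2 + (u ^ 2 + 1) = 0 := by
    have h2 : ψ (y ^ 2) = - ψ (ofq (X ^ 2 + 1)) := by rw [hy2, map_neg]
    have h3 : ψ (ofq (X ^ 2 + 1)) = u ^ 2 + 1 := by
      rw [map_add, map_pow, map_one, map_add, map_pow, map_one]
    rw [map_pow] at h2
    rw [← hv, ← hu] at *
    rw [h2, h3]
    ring
  have hnotreal : ¬(u.im = 0 ∧ v.im = 0) := by
    rintro ⟨h1, h2⟩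
    have := congrArg Complex.re huv
    simp only [Complex.add_re, Complex.one_re, Complex.zero_re] at this
    have hu' : u = (u.re : ℂ) := Complex.ext rfl (by simp [h1])
    have hv' : v = (v.re : ℂ) := Complex.ext rfl (by simp [h2])
    rw [hu', hv'] at huv
    have hre : (v.re ^ 2 + (u.re ^ 2 + 1) : ℝ) = 0 := by exact_mod_cast huv
    nlinarith [sq_nonneg u.re, sq_nonneg v.re]
  -- the real line through the residue point
  set α : ℝ := v.im with hα
  set β : ℝ := -u.im with hβ
  set γ : ℝ := -(α * u.re + β * v.re) with hγ
  have hline : (α : ℂ) * u + (β : ℂ) * v + (γ : ℂ) = 0 := by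
    apply Complex.ext
    · simp [Complex.add_re, Complex.mul_re, hγ]
    · simp [Complex.add_im, Complex.mul_im, hα, hβ]; ring
  set ℓ : A := ofq (C α * X + C γ) + ofq (C β) * y with hℓ
  have hψℓ : ψ ℓ = 0 := by
    simp only [hℓ, map_add, map_mul]
    rw [hψC, hψC, hψC, ← hu, ← hv]
    linear_combination hline
  have hℓP : ℓ ∈ P := (hker ℓ).mpr hψℓ
  have hspanle : Ideal.span {ℓ} ≤ P := Ideal.span_le.mpr (Set.singleton_subset_iff.mpr hℓP)
  suffices hPle : P ≤ Ideal.span {ℓ} by exact ⟨ℓ, le_antisymm hPle hspanle⟩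
  by_cases hβ0 : β = 0
  · -- case `ℓ = α x + γ` with `α ≠ 0`
    have huim0 : u.im = 0 := by rw [show u.im = -β by rw [hβ]; ring, hβ0, neg_zero]
    have hα0 : α ≠ 0 := fun h => hnotreal ⟨huim0, h⟩
    have hℓeq : ℓ = ofq (C α * X + C γ) := by rw [hℓ, hβ0]; simp
    set m' : ℝ[X] := X + C (α⁻¹ * γ) with hm'def
    have hm'monic : m'.Monic := monic_X_add_C _
    have hm' : ofq m' = ofq (C α⁻¹) * ℓ := by
      rw [hℓeq, ← map_mul]
      congr 1
      rw [hm'def, mul_add, ← mul_assoc, ← C_mul, inv_mul_cancel₀ hα0, C_1, one_mul, ← C_mul]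
    have hm'P : ofq m' ∈ P := by rw [hm']; exact Ideal.mul_mem_left _ _ hℓP
    have hm'span : ofq m' ∈ Ideal.span {ℓ} := by
      rw [hm']; exact Ideal.mul_mem_left _ _ (Ideal.mem_span_singleton_self ℓ)
    intro a haP
    obtain ⟨p, q, harep⟩ := rep a
    have hpdec : ofq p = ofq (p %ₘ m') + ofq m' * ofq (p /ₘ m') := by
      conv_lhs => rw [← modByMonic_add_div p m']
      rw [map_add, map_mul]
    have hqdec : ofq q = ofq (q %ₘ m') + ofq m' * ofq (q /ₘ m') := by
      conv_lhs => rw [← modByMonic_add_div q m']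
      rw [map_add, map_mul]
    have hdegm' : ∀ w : ℝ[X], degree (w %ₘ m') ≤ 0 := by
      intro w
      have := degree_modByMonic_lt w hm'monic
      rw [hm'def, degree_X_add_C] at this
      exact Order.le_of_lt_succ (by exact_mod_cast this)
    have hrpC : p %ₘ m' = C ((p %ₘ m').coeff 0) := eq_C_of_degree_le_zero (hdegm' p)
    have hrqC : q %ₘ m' = C ((q %ₘ m').coeff 0) := eq_C_of_degree_le_zero (hdegm' q)
    have hwP : ofq (p %ₘ m') + ofq (q %ₘ m') * y ∈ P := by
      have heq : ofq (p %ₘ m') + ofq (q %ₘ m') * y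
          = a - ofq m' * (ofq (p /ₘ m') + ofq (q /ₘ m') * y) := by
        rw [harep, hpdec, hqdec]; ring
      rw [heq]
      exact Submodule.sub_mem _ haP (Ideal.mul_mem_right _ _ hm'P)
    have hψw : ((p %ₘ m').coeff 0 : ℂ) + ((q %ₘ m').coeff 0 : ℂ) * v = 0 := by
      have h0 : ψ (ofq (p %ₘ m') + ofq (q %ₘ m') * y) = 0 := (hker _).mp hwP
      rw [hrpC, hrqC] at h0
      rw [map_add, map_mul, hψC, hψC, ← hv] at h0
      exact h0
    have hvim : v.im = α := by rw [hα]
    have hcq : ((q %ₘ m').coeff 0) = 0 := by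
      have him := congrArg Complex.im hψw
      simp only [Complex.add_im, Complex.mul_im, Complex.ofReal_im, Complex.ofReal_re,
        Complex.zero_im, zero_mul, add_zero, zero_add] at him
      rcases mul_eq_zero.mp him with h | h
      · exact h
      · exact absurd h (by rw [hvim]; exact hα0)
    have hcp : ((p %ₘ m').coeff 0) = 0 := by
      have hre := congrArg Complex.re hψw
      simp only [hcq, Complex.ofReal_zero, zero_mul, add_zero, Complex.add_re,
        Complex.ofReal_re, Complex.zero_re] at hre
      exact hre
    have hrz : p %ₘ m' = 0 := by rw [hrpC, hcp, C_0]
    have hrz' : q %ₘ m' = 0 := by rw [hrqC, hcq, C_0]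
    have : a = ofq m' * (ofq (p /ₘ m') + ofq (q /ₘ m') * y) := by
      rw [harep, hpdec, hqdec, hrz, hrz', map_zero]; ring
    rw [this]
    exact Ideal.mul_mem_right _ _ hm'span
  · -- case `β ≠ 0`
    have huim : u.im ≠ 0 := fun h => hβ0 (by rw [hβ, h, neg_zero])
    set g : ℝ[X] := C (α ^ 2 + β ^ 2) * X ^ 2 + C (2 * α * γ) * X + C (γ ^ 2 + β ^ 2) with hgdef
    have hab2 : (0:ℝ) < α ^ 2 + β ^ 2 := by
      have h1 : (0:ℝ) < β ^ 2 := lt_of_le_of_ne (sq_nonneg β) (Ne.symm (pow_ne_zero 2 hβ0))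
      nlinarith [sq_nonneg α]
    have hgfact : ofq g = ℓ * (ofq (C α * X + C γ) - ofq (C β) * y) := by
      have h1 : ℓ * (ofq (C α * X + C γ) - ofq (C β) * y)
          = ofq (C α * X + C γ) ^ 2 - ofq (C β) ^ 2 * y ^ 2 := by rw [hℓ]; ring
      rw [h1, hy2, hgdef]
      simp only [ofq_C, map_add, map_mul, map_pow, map_one, map_ofNat]
      ring
    have hgspan : ofq g ∈ Ideal.span {ℓ} := by
      rw [hgfact]; exact Ideal.mul_mem_right _ _ (Ideal.mem_span_singleton_self ℓ)
    have hgP : ofq g ∈ P := by rw [hgfact]; exact Ideal.mul_mem_right _ _ hℓP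
    have hlc : g.leadingCoeff = α ^ 2 + β ^ 2 := by
      rw [hgdef]; exact leadingCoeff_quadratic (ne_of_gt hab2)
    have hg0 : g ≠ 0 := fun h => (ne_of_gt hab2) (by rw [← hlc, h, leadingCoeff_zero])
    set g' : ℝ[X] := g * C g.leadingCoeff⁻¹ with hg'def
    have hg'monic : g'.Monic := monic_mul_leadingCoeff_inv hg0
    have hg'span : ofq g' ∈ Ideal.span {ℓ} := by
      rw [hg'def, map_mul]; exact Ideal.mul_mem_right _ _ hgspan
    have hg'P : ofq g' ∈ P := by
      rw [hg'def, map_mul]; exact Ideal.mul_mem_right _ _ hgP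
    have hg'deg : g'.degree = 2 := by
      rw [hg'def, degree_mul_leadingCoeff_inv _ hg0, hgdef]
      exact degree_quadratic (ne_of_gt hab2)
    intro a haP
    obtain ⟨p, q, harep⟩ := rep a
    have hdec : ofq (C β) * a = ofq (C β * p - (C α * X + C γ) * q) + ofq q * ℓ := by
      rw [harep, hℓ]
      simp only [map_add, map_mul, map_sub]
      ring
    set h1 : ℝ[X] := C β * p - (C α * X + C γ) * q with hh1
    have hg'dec : ofq h1 = ofq (h1 %ₘ g') + ofq g' * ofq (h1 /ₘ g') := by
      conv_lhs => rw [← modByMonic_add_div h1 g']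
      rw [map_add, map_mul]
    have hrP : ofq (h1 %ₘ g') ∈ P := by
      have heq : ofq (h1 %ₘ g') = ofq (C β) * a - ofq q * ℓ - ofq g' * ofq (h1 /ₘ g') := by
        rw [hdec, hg'dec]; ring
      rw [heq]
      exact Submodule.sub_mem _
        (Submodule.sub_mem _ (Ideal.mul_mem_left _ _ haP) (Ideal.mul_mem_left _ _ hℓP))
        (Ideal.mul_mem_right _ _ hg'P)
    have hdegr : degree (h1 %ₘ g') ≤ 1 := by
      have := degree_modByMonic_lt h1 hg'monic
      rw [hg'deg] at this
      exact Order.le_of_lt_succ (by exact_mod_cast this)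
    have hrform : h1 %ₘ g' = C ((h1 %ₘ g').coeff 1) * X + C ((h1 %ₘ g').coeff 0) :=
      eq_X_add_C_of_degree_le_one hdegr
    have hψr : ((h1 %ₘ g').coeff 1 : ℂ) * u + ((h1 %ₘ g').coeff 0 : ℂ) = 0 := by
      have h0 : ψ (ofq (h1 %ₘ g')) = 0 := (hker _).mp hrP
      conv_lhs at h0 => rw [hrform]
      simp only [map_add, map_mul, hψC, ← hu] at h0
      exact h0
    have hr1 : (h1 %ₘ g').coeff 1 = 0 := by
      have him := congrArg Complex.im hψr
      simp only [Complex.add_im, Complex.mul_im, Complex.ofReal_im, Complex.ofReal_re,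
        Complex.zero_im, zero_mul, add_zero, zero_add] at him
      rcases mul_eq_zero.mp him with h | h
      · exact h
      · exact absurd h huim
    have hr0 : (h1 %ₘ g').coeff 0 = 0 := by
      have hre := congrArg Complex.re hψr
      simp only [hr1, Complex.ofReal_zero, zero_mul, zero_add, Complex.add_re,
        Complex.ofReal_re, Complex.zero_re] at hre
      exact hre
    have hrzero : h1 %ₘ g' = 0 := by rw [hrform, hr1, hr0, C_0]; simp
    have hfinal : ofq (C β) * a ∈ Ideal.span {ℓ} := by
      rw [hdec, hg'dec, hrzero, map_zero, zero_add]
      exact Submodule.add_mem _ (Ideal.mul_mem_right _ _ hg'span)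
        (Ideal.mul_mem_left _ _ (Ideal.mem_span_singleton_self ℓ))
    have hβrec : a = ofq (C β⁻¹) * (ofq (C β) * a) := by
      rw [← mul_assoc, ← map_mul, ← C_mul, inv_mul_cancel₀ hβ0, C_1, map_one, one_mul]
    rw [hβrec]
    exact Ideal.mul_mem_left _ _ hfinal

end ConicPID

namespace ConicPID

instance A_pid : IsPrincipalIdealRing A := IsPrincipalIdealRing.of_prime prime_principal

/-- the chain of algebra isomorphisms `ℝ[X₀,X₁] ≃ (ℝ[X])[X]`. -/
def e0 : MvPolynomial (Fin 2) ℝ ≃ₐ[ℝ] Polynomial (Polynomial ℝ) :=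
  (MvPolynomial.finSuccEquiv ℝ 1).trans (Polynomial.mapAlgEquiv
    ((MvPolynomial.finSuccEquiv ℝ 0).trans
      (Polynomial.mapAlgEquiv (MvPolynomial.isEmptyAlgEquiv ℝ (Fin 0)))))

lemma e0_X0 : e0 (MvPolynomial.X 0) = X := by
  unfold e0
  simp [MvPolynomial.finSuccEquiv_X_zero, Polynomial.coe_mapAlgEquiv]

lemma e0_X1 : e0 (MvPolynomial.X 1) = C X := by
  unfold e0
  have h1 : (MvPolynomial.X (1 : Fin 2) : MvPolynomial (Fin 2) ℝ)
      = MvPolynomial.X ((0 : Fin 1).succ) := rfl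
  rw [AlgEquiv.trans_apply, h1, MvPolynomial.finSuccEquiv_X_succ]
  simp [MvPolynomial.finSuccEquiv_X_zero, Polynomial.coe_mapAlgEquiv]

lemma e0_f : e0 ((MvPolynomial.X 0 : MvPolynomial (Fin 2) ℝ) ^ 2 + MvPolynomial.X 1 ^ 2 + 1) = Q := by
  rw [map_add, map_add, map_pow, map_pow, map_one, e0_X0, e0_X1]
  unfold Q
  rw [← C_pow, ← C_1, add_assoc, ← C_add]

end ConicPID

open ConicPID in
def R1equiv : R1 ≃+* A :=
  Ideal.quotientEquiv _ _ e0.toRingEquiv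
    (by rw [Ideal.map_span, Set.image_singleton]; norm_num [e0_f])

/-- The ring `R₁ = ℝ[X,Y]/(X²+Y²+1)` is a Dedekind domain whose ideal
class group is trivial. -/
theorem statement_1 :
    ∃ h : IsDedekindDomain R1, @Subsingleton (@ClassGroup R1 _ h.toIsDomain) := by
  haveI : IsDomain R1 := Function.Injective.isDomain R1equiv.toRingHom R1equiv.injective
  haveI : IsPrincipalIdealRing R1 :=
    IsPrincipalIdealRing.of_surjective R1equiv.symm.toRingHom R1equiv.symm.surjective
  haveI h : IsDedekindDomain R1 := inferInstance
  refine ⟨h, ?_⟩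
  exact Fintype.card_le_one_iff_subsingleton.mp (le_of_eq card_classGroup_eq_one)
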